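/- arXiv:1906.05880 — 2 statements merged into one kernel-verified Lean document; each statement's English description precedes it below -/
import Mathlib

section
/- Let γ ∈ (0,1), s < r < t, and x, y ∈ ℝ. Then J(x,t,y,s;r) := ∫_ℝ |z|^{-γ} exp(-(1/2)((x-z)²/(t-r) + (z-y)²/(r-s))) dz ≤ κ₁(γ) · ((t-r)(r-s)/(t-s))^{(1-γ)/2} · exp(-(1-γ)(x-y)²/(2(t-s))), where κ₁(γ) := (2π)^{(1-γ)/2} κ(γ) (2/(1-γ))^γ and κ(γ) := (γ/(1-γ))^{1-γ} + (γ/(1-γ))^{-γ}. -/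
/-! Completing the square in `z` factors the integrand's Gaussian part into
`exp (-(z - m)² / (2c)) * exp (-(x - y)² / (2(t - s)))` with `c = (t - r)(r - s)/(t - s)`.
Against a Gaussian of height `≤ 1` and mass `√(2πc)`, the weight `|z|^{-γ}` is integrated exactly
on `[-L, L]` and bounded by `L^{-γ}` outside, giving `2 L^{1-γ}/(1-γ) + L^{-γ} √(2πc)`; the
minimising radius `L = γ √(2πc) / 2` turns this into `κ₁(γ) c^{(1-γ)/2}`. The factor `1 - γ` in
the final exponent is then a free weakening. -/

open Real Set MeasureTheory

noncomputable section

/-- κ(γ) := (γ/(1-γ))^{1-γ} + (γ/(1-γ))^{-γ}. -/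
def kappa (γ : ℝ) : ℝ := (γ / (1 - γ)) ^ (1 - γ) + (γ / (1 - γ)) ^ (-γ)

/-- κ₁(γ) := (2π)^{(1-γ)/2} κ(γ) (2/(1-γ))^γ. -/
def kappa1 (γ : ℝ) : ℝ := (2 * π) ^ ((1 - γ) / 2) * kappa γ * (2 / (1 - γ)) ^ γ

open ProbabilityTheory

section

variable {γ : ℝ}

lemma intervalIntegrable_abs_rpow_neg_zero_left (hγ : γ < 1) {L : ℝ} (hL : 0 ≤ L) :
    IntervalIntegrable (fun z : ℝ => |z| ^ (-γ)) volume 0 L :=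
  (intervalIntegral.intervalIntegrable_rpow' (r := -γ) (by linarith)).congr_uIoo fun z hz => by
    rw [uIoo_of_le hL] at hz
    simp only [abs_of_pos hz.1]

lemma intervalIntegrable_abs_rpow_neg_zero_right (hγ : γ < 1) {L : ℝ} (hL : 0 ≤ L) :
    IntervalIntegrable (fun z : ℝ => |z| ^ (-γ)) volume (-L) 0 := by
  simpa only [abs_neg, neg_zero] using
    ((IntervalIntegrable.iff_comp_neg).mp (intervalIntegrable_abs_rpow_neg_zero_left hγ hL)).symm

lemma integral_abs_rpow_neg_zero_left (hγ : γ < 1) {L : ℝ} (hL : 0 ≤ L) :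
    ∫ z in (0 : ℝ)..L, |z| ^ (-γ) = L ^ (1 - γ) / (1 - γ) := by
  rw [intervalIntegral.integral_congr (g := fun z : ℝ => z ^ (-γ)) fun z hz => by
      rw [uIcc_of_le hL] at hz
      simp only [abs_of_nonneg hz.1],
    integral_rpow (Or.inl (by linarith)), zero_rpow (by linarith)]
  ring_nf

lemma integral_abs_rpow_neg_symm (hγ : γ < 1) {L : ℝ} (hL : 0 ≤ L) :
    ∫ z in (-L)..L, |z| ^ (-γ) = 2 * (L ^ (1 - γ) / (1 - γ)) := by
  have heven : ∫ z in (-L)..0, |z| ^ (-γ) = ∫ z in (0 : ℝ)..L, |z| ^ (-γ) := by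
    simpa only [abs_neg, neg_zero] using
      (intervalIntegral.integral_comp_neg (a := 0) (b := L) fun z : ℝ => |z| ^ (-γ)).symm
  rw [← intervalIntegral.integral_add_adjacent_intervals
      (intervalIntegrable_abs_rpow_neg_zero_right hγ hL)
      (intervalIntegrable_abs_rpow_neg_zero_left hγ hL),
    heven, integral_abs_rpow_neg_zero_left hγ hL]
  ring

lemma integral_exp_neg_sub_sq_div {c : ℝ} (hc : 0 < c) (m : ℝ) :
    ∫ z, exp (-(z - m) ^ 2 / (2 * c)) = √(2 * π * c) := by
  have h := integral_gaussianPDFReal_eq_one m (v := c.toNNReal) (by simpa using hc)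
  simp only [gaussianPDFReal_def, Real.coe_toNNReal _ hc.le, integral_const_mul] at h
  exact ((inv_mul_eq_one₀ (by positivity)).1 h).symm

lemma integrable_exp_neg_sub_sq_div {c : ℝ} (hc : 0 < c) (m : ℝ) :
    Integrable fun z => exp (-(z - m) ^ 2 / (2 * c)) := by
  have h := integrable_gaussianPDFReal m c.toNNReal
  simp only [gaussianPDFReal_def, Real.coe_toNNReal _ hc.le] at h
  exact (integrable_const_mul_iff (Ne.isUnit (by positivity)) _).1 h

lemma integral_abs_rpow_neg_mul_le (hγ0 : 0 ≤ γ) (hγ1 : γ < 1) {f : ℝ → ℝ}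
    (hf : Integrable f) (hf0 : ∀ z, 0 ≤ f z) (hf1 : ∀ z, f z ≤ 1) {L : ℝ} (hL : 0 < L) :
    ∫ z, |z| ^ (-γ) * f z ≤ 2 * (L ^ (1 - γ) / (1 - γ)) + L ^ (-γ) * ∫ z, f z := by
  set g := (Ioc (-L) L).indicator fun z : ℝ => |z| ^ (-γ)
  have hg : Integrable g := by
    rw [integrable_indicator_iff measurableSet_Ioc,
      ← intervalIntegrable_iff_integrableOn_Ioc_of_le (by linarith)]
    exact (intervalIntegrable_abs_rpow_neg_zero_right hγ1 hL.le).trans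
      (intervalIntegrable_abs_rpow_neg_zero_left hγ1 hL.le)
  have hle : ∀ z, |z| ^ (-γ) * f z ≤ g z + L ^ (-γ) * f z := by
    intro z
    by_cases hz : z ∈ Ioc (-L) L
    · have : |z| ^ (-γ) * f z ≤ |z| ^ (-γ) :=
        mul_le_of_le_one_right (by positivity) (hf1 z)
      have : 0 ≤ L ^ (-γ) * f z := mul_nonneg (by positivity) (hf0 z)
      simp only [g, indicator_of_mem hz]
      linarith
    · have hLz : L ≤ |z| := by
        rw [mem_Ioc, not_and_or, not_lt, not_le] at hz
        exact le_abs'.2 (hz.imp id le_of_lt)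
      simp only [g, indicator_of_notMem hz, zero_add]
      exact mul_le_mul_of_nonneg_right (rpow_le_rpow_of_nonpos hL hLz (by linarith)) (hf0 z)
  calc ∫ z, |z| ^ (-γ) * f z ≤ ∫ z, (g z + L ^ (-γ) * f z) :=
        integral_mono_of_nonneg (ae_of_all _ fun z => mul_nonneg (by positivity) (hf0 z))
          (hg.add (hf.const_mul _)) (ae_of_all _ hle)
    _ = 2 * (L ^ (1 - γ) / (1 - γ)) + L ^ (-γ) * ∫ z, f z := by
        rw [integral_add hg (hf.const_mul _), integral_const_mul,
          integral_indicator measurableSet_Ioc, ← intervalIntegral.integral_of_le (by linarith),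
          integral_abs_rpow_neg_symm hγ1 hL.le]

lemma kappa_mul_rpow_eq (hγ : γ ∈ Ioo (0 : ℝ) 1) {A : ℝ} (hA : 0 < A) :
    2 * ((γ * A / 2) ^ (1 - γ) / (1 - γ)) + (γ * A / 2) ^ (-γ) * A =
      kappa γ * (2 / (1 - γ)) ^ γ * A ^ (1 - γ) := by
  obtain ⟨hγ0, hγ1⟩ := hγ
  have h1γ : 0 < 1 - γ := by linarith
  have hfirst : 2 * ((γ * A / 2) ^ (1 - γ) / (1 - γ)) =
      (γ / (1 - γ)) ^ (1 - γ) * (2 / (1 - γ)) ^ γ * A ^ (1 - γ) := by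
    refine log_injOn_pos (mem_Ioi.2 (by positivity)) (mem_Ioi.2 (by positivity)) ?_
    simp (disch := positivity) only [log_mul, log_div, log_rpow]
    ring
  have hsecond : (γ * A / 2) ^ (-γ) * A =
      (γ / (1 - γ)) ^ (-γ) * (2 / (1 - γ)) ^ γ * A ^ (1 - γ) := by
    refine log_injOn_pos (mem_Ioi.2 (by positivity)) (mem_Ioi.2 (by positivity)) ?_
    simp (disch := positivity) only [log_mul, log_div, log_rpow]
    ring
  rw [hfirst, hsecond, kappa]
  ring

lemma kappa1_nonneg (hγ : γ ∈ Ioo (0 : ℝ) 1) : 0 ≤ kappa1 γ := by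
  have := hγ.1
  have := sub_pos.2 hγ.2
  unfold kappa1 kappa
  positivity

lemma integral_abs_rpow_neg_mul_gaussian_le (hγ : γ ∈ Ioo (0 : ℝ) 1) (m : ℝ)
    {c : ℝ} (hc : 0 < c) :
    ∫ z, |z| ^ (-γ) * exp (-(z - m) ^ 2 / (2 * c)) ≤ kappa1 γ * c ^ ((1 - γ) / 2) := by
  have hA : 0 < √(2 * π * c) := by positivity
  calc ∫ z, |z| ^ (-γ) * exp (-(z - m) ^ 2 / (2 * c))
      ≤ 2 * ((γ * √(2 * π * c) / 2) ^ (1 - γ) / (1 - γ)) +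
          (γ * √(2 * π * c) / 2) ^ (-γ) * √(2 * π * c) := by
        nth_rw 3 [← integral_exp_neg_sub_sq_div hc m]
        refine integral_abs_rpow_neg_mul_le hγ.1.le hγ.2 (integrable_exp_neg_sub_sq_div hc m)
          (fun z => (exp_pos _).le) (fun z => exp_le_one_iff.2 ?_)
          (div_pos (mul_pos hγ.1 hA) two_pos)
        exact div_nonpos_of_nonpos_of_nonneg (neg_nonpos.2 (sq_nonneg _)) (by positivity)
    _ = kappa1 γ * c ^ ((1 - γ) / 2) := by
        rw [kappa_mul_rpow_eq hγ hA, kappa1, sqrt_eq_rpow, ← rpow_mul (by positivity),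
          mul_rpow (by positivity) hc.le]
        ring_nf

lemma neg_half_mul_sq_div_add_sq_div {a b : ℝ} (ha : a ≠ 0) (hb : b ≠ 0) (hab : a + b ≠ 0)
    (x y z : ℝ) :
    -(1 / 2) * ((x - z) ^ 2 / a + (z - y) ^ 2 / b) =
      -(z - (b * x + a * y) / (a + b)) ^ 2 / (2 * (a * b / (a + b))) +
        -(x - y) ^ 2 / (2 * (a + b)) := by
  field_simp
  ring

end

/-- For γ ∈ (0,1) and s < r < t,
J(x,t,y,s;r) = ∫_ℝ |z|^{-γ} exp(-(1/2)((x-z)²/(t-r)+(z-y)²/(r-s))) dz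
 ≤ κ₁(γ)·((t-r)(r-s)/(t-s))^{(1-γ)/2}·exp(-(1-γ)(x-y)²/(2(t-s))). -/
theorem stmt_4 (γ : ℝ) (hγ : γ ∈ Ioo (0 : ℝ) 1) (s r t x y : ℝ)
    (hsr : s < r) (hrt : r < t) :
    (∫ z : ℝ, |z| ^ (-γ) *
        Real.exp (-(1 / 2) * ((x - z) ^ 2 / (t - r) + (z - y) ^ 2 / (r - s)))) ≤
      kappa1 γ * ((t - r) * (r - s) / (t - s)) ^ ((1 - γ) / 2) *
        Real.exp (-((1 - γ) * (x - y) ^ 2) / (2 * (t - s))) := by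
  have ha : 0 < t - r := sub_pos.2 hrt
  have hb : 0 < r - s := sub_pos.2 hsr
  rw [show t - s = (t - r) + (r - s) by ring]
  simp_rw [neg_half_mul_sq_div_add_sq_div ha.ne' hb.ne' (add_pos ha hb).ne', exp_add, ← mul_assoc]
  rw [integral_mul_const]
  refine mul_le_mul
    (integral_abs_rpow_neg_mul_gaussian_le hγ _ (by positivity))
    (exp_le_exp.2 ?_) (exp_pos _).le ?_
  · gcongr
    nlinarith [mul_nonneg hγ.1.le (sq_nonneg (x - y))]
  · have := kappa1_nonneg hγ
    positivity
end
end

section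
/- Let γ, β ∈ [0,1), α₁, α₂ > -1, and s < t, x ≠ 0, y ∈ ℝ. Define G₁(x,t,y,s) := (t-s)^{α₁} |x|^{-β} exp(-(x-y)²/(2(t-s))) and G₂(x,t,y,s) := (t-s)^{α₂} |x|^{-γ} exp(-(x-y)²/(2(t-s))). Then their convolution G(x,t,y,s) := ∫_s^t ∫_ℝ G₁(x,t,z,r) G₂(z,r,y,s) dz dr satisfies G(x,t,y,s) ≤ κ₁(γ) · (t-s)^{3/2 + α₁ + α₂ - γ/2} · |x|^{-β} · B((3-γ)/2 + α₁, (3-γ)/2 + α₂) · exp(-(1-γ)(x-y)²/(2(t-s))), where B(a,b) = Γ(a)Γ(b)/Γ(a+b) is the Euler Beta function. -/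
/-!
Completing the square in `z`, the product of the two kernels at time `r` is
`exp(-(x-y)²/(2(t-s)))` times a Gaussian in `z` of variance `v = (t-r)(r-s)/(t-s)`. Splitting
the `z`-integral at `|z| = R` bounds `∫ |z|^{-γ} e^{-(z-m)²/(2v)} dz` by
`2R^{1-γ}/(1-γ) + R^{-γ}√(2πv)`, and the optimal `R` turns this into `κ₁(γ) v^{(1-γ)/2}`.
What remains is the Beta integral `∫ₛᵗ (t-r)^{α₁+(1-γ)/2} (r-s)^{α₂+(1-γ)/2} dr`.
-/

open Real Set MeasureTheory

noncomputable section

/-- The Euler Beta function B(a,b) = Γ(a)Γ(b)/Γ(a+b). -/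
def betaFn (a b : ℝ) : ℝ := Real.Gamma a * Real.Gamma b / Real.Gamma (a + b)

theorem intervalIntegral_mono_of_nonneg_of_le_on_Ioo {f g : ℝ → ℝ} {a b : ℝ} (hab : a ≤ b)
    (hf : ∀ x ∈ Ioo a b, 0 ≤ f x) (hg : IntervalIntegrable g volume a b)
    (hfg : ∀ x ∈ Ioo a b, f x ≤ g x) :
    ∫ x in a..b, f x ≤ ∫ x in a..b, g x := by
  rw [intervalIntegral.integral_of_le hab, intervalIntegral.integral_of_le hab,
    integral_Ioc_eq_integral_Ioo, integral_Ioc_eq_integral_Ioo]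
  exact integral_mono_of_nonneg (ae_restrict_of_forall_mem measurableSet_Ioo hf)
    (hg.1.mono_set Ioo_subset_Ioc_self) (ae_restrict_of_forall_mem measurableSet_Ioo hfg)

theorem integral_rpow_mul_one_sub_rpow {a b : ℝ} (ha : 0 < a) (hb : 0 < b) :
    ∫ u in (0 : ℝ)..1, u ^ (a - 1) * (1 - u) ^ (b - 1) = betaFn a b := by
  have hofReal : Complex.betaIntegral a b
      = ((∫ u in (0 : ℝ)..1, u ^ (a - 1) * (1 - u) ^ (b - 1) : ℝ) : ℂ) := by
    rw [Complex.betaIntegral, ← intervalIntegral.integral_ofReal]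
    refine intervalIntegral.integral_congr fun u hu => ?_
    rw [uIcc_of_le zero_le_one] at hu
    have h1u : 0 ≤ 1 - u := sub_nonneg.2 hu.2
    simp only [Complex.ofReal_mul, Complex.ofReal_cpow hu.1, Complex.ofReal_cpow h1u]
    push_cast
    ring_nf
  have h := Complex.Gamma_mul_Gamma_eq_betaIntegral (s := a) (t := b)
    (by simpa using ha) (by simpa using hb)
  rw [hofReal, ← Complex.ofReal_add, Complex.Gamma_ofReal, Complex.Gamma_ofReal,
    Complex.Gamma_ofReal] at h
  have hGamma : Real.Gamma (a + b) ≠ 0 := (Real.Gamma_pos_of_pos (add_pos ha hb)).ne'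
  rw [betaFn, eq_div_iff hGamma, mul_comm]
  exact_mod_cast h.symm

theorem intervalIntegrable_sub_rpow_mul_sub_rpow {a b s t : ℝ} (ha : -1 < a) (hb : -1 < b)
    (hst : s < t) :
    IntervalIntegrable (fun r => (t - r) ^ a * (r - s) ^ b) volume s t := by
  obtain ⟨c, hsc, hct⟩ := exists_between hst
  have hleft : IntervalIntegrable (fun r => (t - r) ^ a * (r - s) ^ b) volume s c := by
    have h := (intervalIntegral.intervalIntegrable_rpow' hb (a := 0) (b := c - s)).comp_sub_right s
    simp only [zero_add, sub_add_cancel] at h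
    refine h.continuousOn_mul (ContinuousOn.rpow_const (by fun_prop) fun r hr => Or.inl ?_)
    rw [uIcc_of_le hsc.le] at hr
    linarith [hr.2]
  have hright : IntervalIntegrable (fun r => (t - r) ^ a * (r - s) ^ b) volume c t := by
    have h := (intervalIntegral.intervalIntegrable_rpow' ha (a := t - c) (b := 0)).comp_sub_left t
    simp only [sub_sub_cancel, sub_zero] at h
    refine h.mul_continuousOn (ContinuousOn.rpow_const (by fun_prop) fun r hr => Or.inl ?_)
    rw [uIcc_of_le hct.le] at hr
    linarith [hr.1]
  exact hleft.trans hright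

theorem integral_sub_rpow_mul_sub_rpow {a b s t : ℝ} (ha : -1 < a) (hb : -1 < b)
    (hst : s < t) :
    ∫ r in s..t, (t - r) ^ a * (r - s) ^ b = (t - s) ^ (a + b + 1) * betaFn (a + 1) (b + 1) := by
  have hT : 0 < t - s := sub_pos.2 hst
  have hsubst := intervalIntegral.integral_comp_mul_add (a := 0) (b := 1)
    (fun r => (t - r) ^ a * (r - s) ^ b) (neg_ne_zero.2 hT.ne') t
  simp only [mul_zero, zero_add, mul_one, neg_mul, smul_eq_mul,
    show -(t - s) + t = s by ring] at hsubst
  rw [intervalIntegral.integral_symm s t, mul_neg, inv_neg, neg_mul, neg_neg] at hsubst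
  have hscale : ∫ u in (0 : ℝ)..1, (t - (-((t - s) * u) + t)) ^ a * (-((t - s) * u) + t - s) ^ b
      = (t - s) ^ (a + b) * ∫ u in (0 : ℝ)..1, u ^ (a + 1 - 1) * (1 - u) ^ (b + 1 - 1) := by
    rw [← intervalIntegral.integral_const_mul]
    refine intervalIntegral.integral_congr fun u hu => ?_
    rw [uIcc_of_le zero_le_one] at hu
    have h1u : 0 ≤ 1 - u := sub_nonneg.2 hu.2
    simp only [add_sub_cancel_right, show t - (-((t - s) * u) + t) = (t - s) * u by ring,
      show -((t - s) * u) + t - s = (t - s) * (1 - u) by ring,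
      Real.mul_rpow hT.le hu.1, Real.mul_rpow hT.le h1u, Real.rpow_add hT]
    ring
  rw [hscale, integral_rpow_mul_one_sub_rpow (by linarith) (by linarith),
    eq_inv_mul_iff_mul_eq₀ hT.ne'] at hsubst
  rw [← hsubst, Real.rpow_add_one hT.ne', Real.rpow_add hT]
  ring

theorem exp_neg_sq_div_eq_exp_neg_mul_sq {v : ℝ} (m z : ℝ) :
    exp (-(z - m) ^ 2 / (2 * v)) = exp (-(2 * v)⁻¹ * (z - m) ^ 2) := by
  ring_nf

theorem integrable_exp_neg_sq_div {v : ℝ} (hv : 0 < v) (m : ℝ) :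
    Integrable fun z => exp (-(z - m) ^ 2 / (2 * v)) := by
  simp only [exp_neg_sq_div_eq_exp_neg_mul_sq m]
  exact (integrable_exp_neg_mul_sq (by positivity)).comp_sub_right m

theorem integral_exp_neg_sq_div {v : ℝ} (hv : 0 < v) (m : ℝ) :
    ∫ z, exp (-(z - m) ^ 2 / (2 * v)) = √(2 * π * v) := by
  simp only [exp_neg_sq_div_eq_exp_neg_mul_sq m]
  rw [integral_sub_right_eq_self (fun z => exp (-(2 * v)⁻¹ * z ^ 2)) m, integral_gaussian]
  congr 1
  field_simp

theorem exp_neg_sq_div_mul_exp_neg_sq_div {τ₁ τ₂ : ℝ} (h₁ : 0 < τ₁) (h₂ : 0 < τ₂) (x y z : ℝ) :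
    exp (-(x - z) ^ 2 / (2 * τ₁)) * exp (-(z - y) ^ 2 / (2 * τ₂))
      = exp (-(x - y) ^ 2 / (2 * (τ₁ + τ₂)))
        * exp (-(z - (τ₂ * x + τ₁ * y) / (τ₁ + τ₂)) ^ 2 / (2 * (τ₁ * τ₂ / (τ₁ + τ₂)))) := by
  rw [← exp_add, ← exp_add]
  congr 1
  field_simp
  ring

theorem intervalIntegrable_abs_rpow {r : ℝ} (hr : -1 < r) (a b : ℝ) :
    IntervalIntegrable (fun z => |z| ^ r) volume a b := by
  have hpos : ∀ c, 0 ≤ c → IntervalIntegrable (fun z => |z| ^ r) volume 0 c := fun c hc =>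
    (intervalIntegral.intervalIntegrable_rpow' hr).congr fun z hz => by
      rw [uIoc_of_le hc] at hz
      simp only [abs_of_pos hz.1]
  have hall : ∀ c, IntervalIntegrable (fun z => |z| ^ r) volume 0 c := fun c => by
    rcases le_total 0 c with hc | hc
    · exact hpos c hc
    · simpa using (hpos (-c) (neg_nonneg.2 hc)).comp_sub_left 0
  exact (hall a).symm.trans (hall b)

theorem intervalIntegral_abs_rpow_neg_symm {γ R : ℝ} (hγ : γ < 1) (hR : 0 ≤ R) :
    ∫ z in -R..R, |z| ^ (-γ) = 2 * R ^ (1 - γ) / (1 - γ) := by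
  have hr : -1 < -γ := by linarith
  have hhalf : ∫ z in (0 : ℝ)..R, |z| ^ (-γ) = R ^ (1 - γ) / (1 - γ) := by
    rw [intervalIntegral.integral_congr (g := fun z => z ^ (-γ)) fun z hz => by
        rw [uIcc_of_le hR] at hz; simp only [abs_of_nonneg hz.1],
      integral_rpow (Or.inl hr), Real.zero_rpow (by linarith), neg_add_eq_sub, sub_zero]
  have hneg : ∫ z in -R..0, |z| ^ (-γ) = ∫ z in (0 : ℝ)..R, |z| ^ (-γ) := by
    simpa using (intervalIntegral.integral_comp_neg (a := 0) (b := R) fun z => |z| ^ (-γ)).symm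
  rw [← intervalIntegral.integral_add_adjacent_intervals (intervalIntegrable_abs_rpow hr _ _)
    (intervalIntegrable_abs_rpow hr _ _), hneg, hhalf]
  ring

theorem integral_abs_rpow_mul_exp_le {γ v R : ℝ} (hγ0 : 0 ≤ γ) (hγ1 : γ < 1) (hv : 0 < v)
    (hR : 0 < R) (m : ℝ) :
    ∫ z, |z| ^ (-γ) * exp (-(z - m) ^ 2 / (2 * v))
      ≤ 2 * R ^ (1 - γ) / (1 - γ) + R ^ (-γ) * √(2 * π * v) := by
  set g := (Icc (-R) R).indicator fun z => |z| ^ (-γ) with hg_def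
  have hg : Integrable g := by
    rw [integrable_indicator_iff measurableSet_Icc,
      ← intervalIntegrable_iff_integrableOn_Icc_of_le (by linarith)]
    exact intervalIntegrable_abs_rpow (by linarith) _ _
  have hgauss := (integrable_exp_neg_sq_div hv m).const_mul (R ^ (-γ))
  have hbound : ∀ z, |z| ^ (-γ) * exp (-(z - m) ^ 2 / (2 * v))
      ≤ g z + R ^ (-γ) * exp (-(z - m) ^ 2 / (2 * v)) := by
    intro z
    by_cases hz : z ∈ Icc (-R) R
    · have hexp : exp (-(z - m) ^ 2 / (2 * v)) ≤ 1 := exp_le_one_iff.2 (by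
        apply div_nonpos_of_nonpos_of_nonneg <;> nlinarith [sq_nonneg (z - m)])
      rw [hg_def, Set.indicator_of_mem hz]
      nlinarith [Real.rpow_nonneg (abs_nonneg z) (-γ), Real.rpow_nonneg hR.le (-γ),
        exp_pos (-(z - m) ^ 2 / (2 * v))]
    · have hRz : R ≤ |z| := by
        by_contra! h
        exact hz (abs_le.1 h.le)
      rw [hg_def, Set.indicator_of_notMem hz, zero_add]
      exact mul_le_mul_of_nonneg_right (Real.rpow_le_rpow_of_nonpos hR hRz (neg_nonpos.2 hγ0))
        (exp_pos _).le
  calc ∫ z, |z| ^ (-γ) * exp (-(z - m) ^ 2 / (2 * v))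
      ≤ ∫ z, g z + R ^ (-γ) * exp (-(z - m) ^ 2 / (2 * v)) :=
        integral_mono_of_nonneg (ae_of_all _ fun z => by positivity) (hg.add hgauss)
          (ae_of_all _ hbound)
    _ = 2 * R ^ (1 - γ) / (1 - γ) + R ^ (-γ) * √(2 * π * v) := by
        rw [integral_add hg hgauss, integral_indicator measurableSet_Icc,
          integral_Icc_eq_integral_Ioc, ← intervalIntegral.integral_of_le (by linarith),
          intervalIntegral_abs_rpow_neg_symm hγ1 hR.le, integral_const_mul,
          integral_exp_neg_sq_div hv]

theorem rpow_one_sub_eq_rpow_neg_mul {x : ℝ} (hx : x ≠ 0) (y : ℝ) : x ^ (1 - y) = x ^ (-y) * x := by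
  rw [← Real.rpow_add_one hx]
  ring_nf

theorem kappa_eq {γ : ℝ} (hγ0 : 0 < γ) (hγ1 : γ < 1) :
    kappa γ = (γ / (1 - γ)) ^ (-γ) / (1 - γ) := by
  have h1γ : 0 < 1 - γ := sub_pos.2 hγ1
  rw [kappa, rpow_one_sub_eq_rpow_neg_mul (div_pos hγ0 h1γ).ne']
  field_simp
  ring

/- `R = γ √(2πv) / 2` minimizes the bound `2 R^{1-γ}/(1-γ) + R^{-γ} √(2πv)` of
`integral_abs_rpow_mul_exp_le`. -/
theorem kappa1_mul_rpow_eq {γ v : ℝ} (hγ0 : 0 < γ) (hγ1 : γ < 1) (hv : 0 < v) :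
    2 * (γ * √(2 * π * v) / 2) ^ (1 - γ) / (1 - γ)
        + (γ * √(2 * π * v) / 2) ^ (-γ) * √(2 * π * v)
      = kappa1 γ * v ^ ((1 - γ) / 2) := by
  set S := √(2 * π * v) with hS_def
  have hS : 0 < S := Real.sqrt_pos.2 (by positivity)
  have h1γ : 0 < 1 - γ := sub_pos.2 hγ1
  have hR : 0 < γ * S / 2 := by positivity
  have hSpow : (2 * π) ^ ((1 - γ) / 2) * v ^ ((1 - γ) / 2) = S ^ (-γ) * S := by
    rw [← Real.mul_rpow (by positivity) hv.le, ← rpow_one_sub_eq_rpow_neg_mul hS.ne', hS_def,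
      Real.sqrt_eq_rpow, ← Real.rpow_mul (by positivity)]
    ring_nf
  have hRpow : (γ * S / 2) ^ (-γ) = (γ / (1 - γ)) ^ (-γ) * ((1 - γ) / 2) ^ (-γ) * S ^ (-γ) := by
    rw [← Real.mul_rpow (by positivity) (by positivity), ← Real.mul_rpow (by positivity) hS.le]
    congr 1
    field_simp
  have hinv : (2 / (1 - γ)) ^ γ = ((1 - γ) / 2) ^ (-γ) := by
    rw [Real.rpow_neg (by positivity), ← Real.inv_rpow (by positivity), inv_div]
  rw [rpow_one_sub_eq_rpow_neg_mul hR.ne', kappa1, kappa_eq hγ0 hγ1, hinv, hRpow,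
    mul_right_comm _ _ (v ^ _), mul_right_comm _ _ (v ^ _), hSpow]
  field_simp
  ring

theorem kappa1_nonneg_s9 {γ : ℝ} (hγ0 : 0 ≤ γ) (hγ1 : γ < 1) : 0 ≤ kappa1 γ := by
  have hc : 0 ≤ γ / (1 - γ) := div_nonneg hγ0 (sub_nonneg.2 hγ1.le)
  unfold kappa1 kappa
  positivity

theorem integral_abs_rpow_mul_exp_le_kappa1 {γ v : ℝ} (hγ0 : 0 ≤ γ) (hγ1 : γ < 1) (hv : 0 < v)
    (m : ℝ) :
    ∫ z, |z| ^ (-γ) * exp (-(z - m) ^ 2 / (2 * v)) ≤ kappa1 γ * v ^ ((1 - γ) / 2) := by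
  rcases hγ0.eq_or_lt with rfl | hγ
  · simp [kappa1, kappa, integral_exp_neg_sq_div hv, Real.sqrt_eq_rpow,
      Real.mul_rpow (by positivity : (0 : ℝ) ≤ 2 * π) hv.le]
  · rw [← kappa1_mul_rpow_eq hγ hγ1 hv]
    exact integral_abs_rpow_mul_exp_le hγ0 hγ1 hv (by positivity) m

/- The paper's kernel `G(x,t,y,s)` is `singularHeatKernel α β (t - s) x y`. -/
def singularHeatKernel (α β τ x y : ℝ) : ℝ := τ ^ α * |x| ^ (-β) * exp (-((x - y) ^ 2) / (2 * τ))

theorem singularHeatKernel_nonneg {τ : ℝ} (hτ : 0 ≤ τ) (α β x y : ℝ) :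
    0 ≤ singularHeatKernel α β τ x y := by
  unfold singularHeatKernel
  positivity

theorem integral_singularHeatKernel_mul_le {γ τ₁ τ₂ : ℝ} (hγ0 : 0 ≤ γ) (hγ1 : γ < 1)
    (h₁ : 0 < τ₁) (h₂ : 0 < τ₂) (α₁ α₂ β x y : ℝ) :
    ∫ z, singularHeatKernel α₁ β τ₁ x z * singularHeatKernel α₂ γ τ₂ z y
      ≤ τ₁ ^ α₁ * τ₂ ^ α₂ * |x| ^ (-β) * exp (-(x - y) ^ 2 / (2 * (τ₁ + τ₂)))
        * (kappa1 γ * (τ₁ * τ₂ / (τ₁ + τ₂)) ^ ((1 - γ) / 2)) := by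
  have hfactor : ∀ z, singularHeatKernel α₁ β τ₁ x z * singularHeatKernel α₂ γ τ₂ z y
      = τ₁ ^ α₁ * τ₂ ^ α₂ * |x| ^ (-β) * exp (-(x - y) ^ 2 / (2 * (τ₁ + τ₂)))
        * (|z| ^ (-γ) * exp (-(z - (τ₂ * x + τ₁ * y) / (τ₁ + τ₂)) ^ 2
          / (2 * (τ₁ * τ₂ / (τ₁ + τ₂))))) := fun z => by
    simp only [singularHeatKernel]
    linear_combination (τ₁ ^ α₁ * τ₂ ^ α₂ * |x| ^ (-β) * |z| ^ (-γ))
      * exp_neg_sq_div_mul_exp_neg_sq_div h₁ h₂ x y z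
  simp only [hfactor, integral_const_mul]
  gcongr
  exact integral_abs_rpow_mul_exp_le_kappa1 hγ0 hγ1 (by positivity) _

theorem integral_singularHeatKernel_mul_le_of_mem_Ioo {γ s r t : ℝ} (hγ0 : 0 ≤ γ) (hγ1 : γ < 1)
    (hsr : s < r) (hrt : r < t) (α₁ α₂ β x y : ℝ) :
    ∫ z, singularHeatKernel α₁ β (t - r) x z * singularHeatKernel α₂ γ (r - s) z y
      ≤ kappa1 γ * (t - s) ^ (-((1 - γ) / 2)) * |x| ^ (-β)
          * exp (-((1 - γ) * (x - y) ^ 2) / (2 * (t - s)))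
          * ((t - r) ^ (α₁ + (1 - γ) / 2) * (r - s) ^ (α₂ + (1 - γ) / 2)) := by
  have h₁ : 0 < t - r := sub_pos.2 hrt
  have h₂ : 0 < r - s := sub_pos.2 hsr
  have hT : 0 < t - s := sub_pos.2 (hsr.trans hrt)
  have hv : ((t - r) * (r - s) / (t - s)) ^ ((1 - γ) / 2)
      = (t - r) ^ ((1 - γ) / 2) * (r - s) ^ ((1 - γ) / 2) * (t - s) ^ (-((1 - γ) / 2)) := by
    rw [Real.div_rpow (by positivity) hT.le, Real.mul_rpow h₁.le h₂.le, Real.rpow_neg hT.le,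
      div_eq_mul_inv]
  have hexp : exp (-(x - y) ^ 2 / (2 * (t - s)))
      ≤ exp (-((1 - γ) * (x - y) ^ 2) / (2 * (t - s))) := by
    gcongr
    nlinarith [sq_nonneg (x - y)]
  have hκ := kappa1_nonneg_s9 hγ0 hγ1
  have hweaken := mul_le_mul_of_nonneg_left hexp (by positivity : 0 ≤ kappa1 γ
    * (t - s) ^ (-((1 - γ) / 2)) * |x| ^ (-β) * (t - r) ^ α₁ * (t - r) ^ ((1 - γ) / 2)
    * (r - s) ^ α₂ * (r - s) ^ ((1 - γ) / 2))
  have hbound := integral_singularHeatKernel_mul_le hγ0 hγ1 h₁ h₂ α₁ α₂ β x y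
  rw [show t - r + (r - s) = t - s by ring, hv] at hbound
  rw [Real.rpow_add h₁, Real.rpow_add h₂]
  linear_combination hbound + hweaken

theorem stmt_9_general (γ β α₁ α₂ : ℝ) (hγ : γ ∈ Ico (0 : ℝ) 1)
    (hα₁ : -1 < α₁) (hα₂ : -1 < α₂) (s t x y : ℝ) (hst : s < t) :
    (∫ r in s..t, ∫ z : ℝ,
        ((t - r) ^ α₁ * |x| ^ (-β) * Real.exp (-((x - z) ^ 2) / (2 * (t - r)))) *
          ((r - s) ^ α₂ * |z| ^ (-γ) * Real.exp (-((z - y) ^ 2) / (2 * (r - s))))) ≤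
      kappa1 γ * (t - s) ^ (3 / 2 + α₁ + α₂ - γ / 2) * |x| ^ (-β) *
        betaFn ((3 - γ) / 2 + α₁) ((3 - γ) / 2 + α₂) *
          Real.exp (-((1 - γ) * (x - y) ^ 2) / (2 * (t - s))) := by
  obtain ⟨hγ0, hγ1⟩ := hγ
  have hT : 0 < t - s := sub_pos.2 hst
  have ha : -1 < α₁ + (1 - γ) / 2 := by linarith
  have hb : -1 < α₂ + (1 - γ) / 2 := by linarith
  set D := kappa1 γ * (t - s) ^ (-((1 - γ) / 2)) * |x| ^ (-β)
    * exp (-((1 - γ) * (x - y) ^ 2) / (2 * (t - s)))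
  calc _ ≤ ∫ r in s..t, D * ((t - r) ^ (α₁ + (1 - γ) / 2) * (r - s) ^ (α₂ + (1 - γ) / 2)) :=
        intervalIntegral_mono_of_nonneg_of_le_on_Ioo hst.le
          (fun r hr => integral_nonneg fun z => mul_nonneg
            (singularHeatKernel_nonneg (sub_pos.2 hr.2).le _ _ _ _)
            (singularHeatKernel_nonneg (sub_pos.2 hr.1).le _ _ _ _))
          ((intervalIntegrable_sub_rpow_mul_sub_rpow ha hb hst).const_mul D)
          fun r hr => integral_singularHeatKernel_mul_le_of_mem_Ioo hγ0 hγ1 hr.1 hr.2 _ _ _ _ _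
    _ = D * ((t - s) ^ (α₁ + (1 - γ) / 2 + (α₂ + (1 - γ) / 2) + 1)
          * betaFn ((3 - γ) / 2 + α₁) ((3 - γ) / 2 + α₂)) := by
        rw [intervalIntegral.integral_const_mul, integral_sub_rpow_mul_sub_rpow ha hb hst]
        ring_nf
    _ = _ := by
        have hpow : (t - s) ^ (-((1 - γ) / 2))
            * (t - s) ^ (α₁ + (1 - γ) / 2 + (α₂ + (1 - γ) / 2) + 1)
            = (t - s) ^ (3 / 2 + α₁ + α₂ - γ / 2) := by
          rw [← Real.rpow_add hT]
          ring_nf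
        rw [← hpow]
        ring

/-- With G₁(x,t,y,s) = (t-s)^{α₁}|x|^{-β}exp(-(x-y)²/(2(t-s))) and
G₂(x,t,y,s) = (t-s)^{α₂}|x|^{-γ}exp(-(x-y)²/(2(t-s))), the convolution
G = G₁*G₂ satisfies
G(x,t,y,s) ≤ κ₁(γ)(t-s)^{3/2+α₁+α₂-γ/2}|x|^{-β}B((3-γ)/2+α₁,(3-γ)/2+α₂)·
exp(-(1-γ)(x-y)²/(2(t-s))). -/
theorem stmt_9 (γ β α₁ α₂ : ℝ) (hγ : γ ∈ Ico (0 : ℝ) 1) (hβ : β ∈ Ico (0 : ℝ) 1)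
    (hα₁ : -1 < α₁) (hα₂ : -1 < α₂) (s t x y : ℝ) (hst : s < t) (hx : x ≠ 0) :
    (∫ r in s..t, ∫ z : ℝ,
        ((t - r) ^ α₁ * |x| ^ (-β) * Real.exp (-((x - z) ^ 2) / (2 * (t - r)))) *
          ((r - s) ^ α₂ * |z| ^ (-γ) * Real.exp (-((z - y) ^ 2) / (2 * (r - s))))) ≤
      kappa1 γ * (t - s) ^ (3 / 2 + α₁ + α₂ - γ / 2) * |x| ^ (-β) *
        betaFn ((3 - γ) / 2 + α₁) ((3 - γ) / 2 + α₂) *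
          Real.exp (-((1 - γ) * (x - y) ^ 2) / (2 * (t - s))) :=
  stmt_9_general γ β α₁ α₂ hγ hα₁ hα₂ s t x y hst
end
end
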